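/- Let d: X × X̂ → [0, d*] be a distortion measure on finite sets with a zero entry in every row (i.e., for each x there is x̂ with d(x,x̂) = 0), and let d̃ be the minimum nonzero distortion. Then for every probability distribution p on X and every D with 0 ≤ D ≤ d̃/4, the IID rate-distortion function satisfies |R(p,0) - R(p,D)| ≤ (4D/d̃) · ln(d̃·|X|·|X̂| / (2D)). -/

import Mathlib

open BigOperators Finset Real

def IsPMF {X : Type*} [Fintype X] (p : X → ℝ) : Prop :=
  (∀ x, 0 ≤ p x) ∧ ∑ x, p x = 1

def IsChannel {X Xh : Type*} [Fintype X] [Fintype Xh] (W : X → Xh → ℝ) : Prop :=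
  (∀ x y, 0 ≤ W x y) ∧ ∀ x, ∑ y, W x y = 1

noncomputable def avgDist {X Xh : Type*} [Fintype X] [Fintype Xh]
    (d : X → Xh → ℝ) (p : X → ℝ) (W : X → Xh → ℝ) : ℝ :=
  ∑ x, ∑ y, p x * W x y * d x y

noncomputable def ent {α : Type*} [Fintype α] (p : α → ℝ) : ℝ :=
  -∑ a, p a * Real.log (p a)

noncomputable def mutInfo {X Xh : Type*} [Fintype X] [Fintype Xh]
    (p : X → ℝ) (W : X → Xh → ℝ) : ℝ :=
  ent p + ent (fun y => ∑ x, p x * W x y) - ent (fun z : X × Xh => p z.1 * W z.1 z.2)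

/-- The IID rate-distortion function `R(p, D)` (in nats). -/
noncomputable def RD {X Xh : Type*} [Fintype X] [Fintype Xh]
    (d : X → Xh → ℝ) (p : X → ℝ) (D : ℝ) : ℝ :=
  sInf {r | ∃ W : X → Xh → ℝ, IsChannel W ∧ avgDist d p W ≤ D ∧ r = mutInfo p W}

/-!
Let `W` be a channel of average distortion at most `D`. Moving all the mass that `W` puts on pairs
of positive distortion to a zero-distortion reconstruction gives a channel of distortion `0`; by
Markov's inequality the moved mass `s` is at most `D / d̃`. Since `-t log t` is subadditive and
rises by at most `δ` when `δ` is removed from an argument `≤ 1`, the output entropy can rise, and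
the joint entropy fall, by at most `s log (|X| |X̂| / s) + s` each; this is at most
`(2D / d̃) log (d̃ |X| |X̂| / 2D)` once `|X| |X̂| ≥ 4`. If `|X| = 1` or `|X̂| = 1` every mutual
information vanishes.
-/

lemma negMulLog_add_le {a b : ℝ} (ha : 0 ≤ a) (hb : 0 ≤ b) :
    negMulLog (a + b) ≤ negMulLog a + negMulLog b := by
  have key : ∀ {u v : ℝ}, 0 ≤ u → 0 ≤ v → u * log u ≤ u * log (u + v) := by
    intro u v hu hv
    rcases hu.eq_or_lt with rfl | hu
    · simp
    · exact mul_le_mul_of_nonneg_left (log_le_log hu (by linarith)) hu.le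
  have hab := key ha hb
  have hba := key hb ha
  rw [add_comm b] at hba
  simp only [negMulLog, neg_mul]
  linarith

lemma negMulLog_sub_negMulLog_add_le {c r : ℝ} (hc : 0 ≤ c) (hr : 0 ≤ r) (h1 : c + r ≤ 1) :
    negMulLog c - negMulLog (c + r) ≤ r := by
  have hgain : c * (log (c + r) - log c) ≤ r := by
    rcases hc.eq_or_lt with rfl | hc
    · simpa using hr
    calc c * (log (c + r) - log c) = c * log ((c + r) / c) := by
          rw [log_div (by linarith) hc.ne']
      _ ≤ c * ((c + r) / c - 1) :=
          mul_le_mul_of_nonneg_left (log_le_sub_one_of_pos (by positivity)) hc.le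
      _ = r := by field_simp; ring
  have hloss : r * log (c + r) ≤ 0 :=
    mul_nonpos_of_nonneg_of_nonpos hr (log_nonpos (by linarith) h1)
  simp only [negMulLog]
  linarith

lemma mul_log_div_add_le {N s t : ℝ} (hs : 0 ≤ s) (hst : 2 * s ≤ t) (hN : exp 2 * t ≤ N) :
    s * log (N / s) + s ≤ t * log (N / t) := by
  rcases hs.eq_or_lt with rfl | hs
  · rcases (show (0 : ℝ) ≤ t by linarith).eq_or_lt with rfl | ht
    · simp
    have hlog : 0 ≤ log (N / t) :=
      log_nonneg ((one_le_exp (by norm_num)).trans ((le_div_iff₀ ht).2 hN))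
    simpa using mul_nonneg ht.le hlog
  have ht : 0 < t := by linarith
  have hN0 : 0 < N := lt_of_lt_of_le (by positivity) hN
  have hlog : 2 ≤ log (N / t) := (le_log_iff_exp_le (by positivity)).2 ((le_div_iff₀ ht).2 hN)
  have hsplit : log (N / s) = log (N / t) + log (t / s) := by
    rw [← log_mul (by positivity) (by positivity), div_mul_div_cancel₀ ht.ne']
  have hgain : s * log (t / s) ≤ t - s :=
    calc s * log (t / s) ≤ s * (t / s - 1) :=
          mul_le_mul_of_nonneg_left (log_le_sub_one_of_pos (by positivity)) hs.le
      _ = t - s := by field_simp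
  rw [hsplit]
  nlinarith

lemma ent_eq_sum_negMulLog {α : Type*} [Fintype α] (p : α → ℝ) :
    ent p = ∑ a, negMulLog (p a) := by
  simp [ent, negMulLog, Finset.sum_neg_distrib]

lemma ent_le_mul_log {α : Type*} [Fintype α] {a : α → ℝ} (ha : ∀ i, 0 ≤ a i) {K : ℝ}
    (hK : (Fintype.card α : ℝ) ≤ K) :
    ent a ≤ (∑ i, a i) * log (K / ∑ i, a i) := by
  rcases isEmpty_or_nonempty α with hα | hα
  · simp [ent]
  set s := ∑ i, a i
  set n := (Fintype.card α : ℝ)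
  have hn : 0 < n := by positivity
  have hjensen := concaveOn_negMulLog.le_map_sum (t := univ) (w := fun _ => n⁻¹) (p := a)
    (fun _ _ => by positivity)
    (by rw [sum_const, card_univ, nsmul_eq_mul]; exact mul_inv_cancel₀ hn.ne') (fun i _ => ha i)
  simp only [smul_eq_mul, ← mul_sum] at hjensen
  have hcard : s * log (n / s) ≤ s * log (K / s) := by
    have hs : 0 ≤ s := sum_nonneg fun i _ => ha i
    rcases hs.eq_or_lt with hs | hs
    · rw [← hs]; simp
    exact mul_le_mul_of_nonneg_left
      (log_le_log (by positivity) (div_le_div_of_nonneg_right hK hs.le)) hs.le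
  calc ent a = n * (n⁻¹ * ∑ i, negMulLog (a i)) := by
        rw [ent_eq_sum_negMulLog]; field_simp
    _ ≤ n * negMulLog (n⁻¹ * s) := mul_le_mul_of_nonneg_left hjensen hn.le
    _ = s * log (n / s) := by
        rw [negMulLog, inv_mul_eq_div, ← inv_div n s, log_inv]; field_simp
    _ ≤ s * log (K / s) := hcard

lemma ent_add_sub_ent_add_le {α : Type*} [Fintype α] {g a r : α → ℝ} (hg : ∀ i, 0 ≤ g i)
    (ha : ∀ i, 0 ≤ a i) (hr : ∀ i, 0 ≤ r i) (h1 : ∀ i, g i + r i ≤ 1) :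
    ent (g + a) - ent (g + r) ≤ ent a + ∑ i, r i := by
  simp only [ent_eq_sum_negMulLog, Pi.add_apply, ← sum_sub_distrib, ← sum_add_distrib]
  refine sum_le_sum fun i _ => ?_
  have := negMulLog_add_le (hg i) (ha i)
  have := negMulLog_sub_negMulLog_add_le (hg i) (hr i) (h1 i)
  linarith

lemma IsPMF.le_one {α : Type*} [Fintype α] {p : α → ℝ} (hp : IsPMF p) (a : α) : p a ≤ 1 :=
  hp.2 ▸ single_le_sum (fun i _ => hp.1 i) (mem_univ a)

lemma IsPMF.nonempty {α : Type*} [Fintype α] {p : α → ℝ} (hp : IsPMF p) : Nonempty α := by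
  by_contra h
  rw [not_nonempty_iff] at h
  simpa using hp.2

lemma IsPMF.ent_nonneg {α : Type*} [Fintype α] {p : α → ℝ} (hp : IsPMF p) : 0 ≤ ent p := by
  rw [ent_eq_sum_negMulLog]
  exact sum_nonneg fun a _ => negMulLog_nonneg (hp.1 a) (hp.le_one a)

lemma IsPMF.ent_le_log_card {α : Type*} [Fintype α] {p : α → ℝ} (hp : IsPMF p) :
    ent p ≤ log (Fintype.card α) := by
  simpa [hp.2] using ent_le_mul_log hp.1 le_rfl

section Channel

variable {X Xh : Type*} [Fintype X] [Fintype Xh] {p : X → ℝ} {W : X → Xh → ℝ}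

lemma IsPMF.joint (hp : IsPMF p) (hW : IsChannel W) :
    IsPMF (fun z : X × Xh => p z.1 * W z.1 z.2) :=
  ⟨fun z => mul_nonneg (hp.1 z.1) (hW.1 z.1 z.2), by
    simp [Fintype.sum_prod_type, ← mul_sum, hW.2, hp.2]⟩

lemma IsPMF.output (hp : IsPMF p) (hW : IsChannel W) :
    IsPMF (fun y => ∑ x, p x * W x y) :=
  ⟨fun y => sum_nonneg fun x _ => mul_nonneg (hp.1 x) (hW.1 x y), by
    simpa [Fintype.sum_prod_type_right] using (hp.joint hW).2⟩

lemma neg_log_card_le_mutInfo (hp : IsPMF p) (hW : IsChannel W) :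
    -log (Fintype.card X * Fintype.card Xh) ≤ mutInfo p W := by
  have := (hp.joint hW).ent_le_log_card
  rw [Fintype.card_prod, Nat.cast_mul] at this
  unfold mutInfo
  linarith [hp.ent_nonneg, (hp.output hW).ent_nonneg]

lemma mutInfo_eq_zero_of_unique_left [Unique X] (hp : IsPMF p) (W : X → Xh → ℝ) :
    mutInfo p W = 0 := by
  have hp1 : p default = 1 := by simpa using hp.2
  simp [mutInfo, ent_eq_sum_negMulLog, Fintype.sum_prod_type, hp1]

lemma mutInfo_eq_zero_of_unique_right [Unique Xh] (hp : IsPMF p) (hW : IsChannel W) :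
    mutInfo p W = 0 := by
  have hW1 : ∀ x, W x default = 1 := fun x => by simpa using hW.2 x
  simp [mutInfo, ent_eq_sum_negMulLog, Fintype.sum_prod_type, hW1, hp.2]

lemma mutInfo_eq_zero_of_card_eq_one (hp : IsPMF p) (hW : IsChannel W)
    (h : Fintype.card X = 1 ∨ Fintype.card Xh = 1) : mutInfo p W = 0 := by
  rcases h with h | h <;> obtain ⟨_⟩ := Fintype.card_eq_one_iff_nonempty_unique.1 h
  exacts [mutInfo_eq_zero_of_unique_left hp W, mutInfo_eq_zero_of_unique_right hp hW]

end Channel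

section RateDistortion

variable {X Xh : Type*} [Fintype X] [Fintype Xh] {d : X → Xh → ℝ} {p : X → ℝ} {D : ℝ}

lemma RD_le_mutInfo (hp : IsPMF p) {W : X → Xh → ℝ} (hW : IsChannel W)
    (hWD : avgDist d p W ≤ D) : RD d p D ≤ mutInfo p W :=
  csInf_le ⟨_, by rintro r ⟨V, hV, -, rfl⟩; exact neg_log_card_le_mutInfo hp hV⟩ ⟨W, hW, hWD, rfl⟩

lemma le_RD {c : ℝ} (hfeas : ∃ W, IsChannel W ∧ avgDist d p W ≤ D)
    (h : ∀ W, IsChannel W → avgDist d p W ≤ D → c ≤ mutInfo p W) : c ≤ RD d p D := by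
  obtain ⟨W, hW, hWD⟩ := hfeas
  exact le_csInf ⟨_, W, hW, hWD, rfl⟩ (by rintro r ⟨V, hV, hVD, rfl⟩; exact h V hV hVD)

end RateDistortion

section Redirect

variable {X Xh : Type*} [Fintype X] [Fintype Xh]

noncomputable def badMass (d W : X → Xh → ℝ) (x : X) : ℝ :=
  ∑ y, if d x y = 0 then 0 else W x y

noncomputable def positiveDistortionProb (d : X → Xh → ℝ) (p : X → ℝ) (W : X → Xh → ℝ) : ℝ :=
  ∑ x, p x * badMass d W x

noncomputable def redirect [DecidableEq Xh] (d : X → Xh → ℝ) (y0 : X → Xh) (W : X → Xh → ℝ)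
    (x : X) (y : Xh) : ℝ :=
  (if d x y = 0 then W x y else 0) + if y = y0 x then badMass d W x else 0

variable {d : X → Xh → ℝ} {p : X → ℝ} {W : X → Xh → ℝ}

lemma badMass_nonneg (hW : IsChannel W) (x : X) : 0 ≤ badMass d W x :=
  sum_nonneg fun y _ => by split_ifs <;> simp [hW.1 x y]

-- Markov's inequality for the distortion.
lemma mul_positiveDistortionProb_le_avgDist {dtil : ℝ} (hdtil : ∀ x y, d x y ≠ 0 → dtil ≤ d x y)
    (hp : IsPMF p) (hW : IsChannel W) :
    dtil * positiveDistortionProb d p W ≤ avgDist d p W := by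
  simp only [positiveDistortionProb, avgDist, badMass, mul_sum]
  refine sum_le_sum fun x _ => sum_le_sum fun y _ => ?_
  split_ifs with hd
  · simp [hd]
  · nlinarith [hdtil x y hd, mul_nonneg (hp.1 x) (hW.1 x y)]

variable [DecidableEq Xh] {y0 : X → Xh}

lemma IsChannel.redirect (hW : IsChannel W) : IsChannel (redirect d y0 W) := by
  refine ⟨fun x y => add_nonneg ?_ ?_, fun x => ?_⟩
  · split_ifs <;> simp [hW.1 x y]
  · split_ifs <;> simp [badMass_nonneg hW x]
  rw [← hW.2 x]
  simp only [_root_.redirect, sum_add_distrib, sum_ite_eq', mem_univ, if_true, badMass]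
  rw [← sum_add_distrib]
  exact sum_congr rfl fun y _ => by split_ifs <;> ring

lemma avgDist_redirect (hy0 : ∀ x, d x (y0 x) = 0) (p : X → ℝ) :
    avgDist d p (redirect d y0 W) = 0 :=
  sum_eq_zero fun x _ => sum_eq_zero fun y _ => by
    by_cases hd : d x y = 0
    · simp [hd]
    have hy : y ≠ y0 x := fun h => hd (h ▸ hy0 x)
    simp [redirect, hd, hy]

-- Each of the two entropies moves by at most `s log (|α| |β| / s) + s`.
lemma ent_marginal_sub_ent_le {α β : Type*} [Fintype α] [Nonempty α] [Fintype β]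
    {G R A : α × β → ℝ} (hG : ∀ z, 0 ≤ G z) (hR : ∀ z, 0 ≤ R z) (hA : ∀ z, 0 ≤ A z)
    (hGR : ∀ y, ∑ x, (G + R) (x, y) ≤ 1) (hGA : ∀ z, G z + A z ≤ 1)
    (hRA : ∑ z, R z = ∑ z, A z) :
    ent (fun y => ∑ x, (G + A) (x, y)) - ent (G + A) ≤
      ent (fun y => ∑ x, (G + R) (x, y)) - ent (G + R) +
        2 * ((∑ z, A z) * log (Fintype.card α * Fintype.card β / ∑ z, A z) + ∑ z, A z) := by
  set s := ∑ z, A z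
  set N : ℝ := Fintype.card α * Fintype.card β
  have hout : ∀ f g : α × β → ℝ, (fun y => ∑ x, (f + g) (x, y)) =
      (fun y => ∑ x, f (x, y)) + fun y => ∑ x, g (x, y) := fun f g => by
    funext y; simp [sum_add_distrib]
  have hβN : (Fintype.card β : ℝ) ≤ N := by
    have : (1 : ℝ) ≤ Fintype.card α := by exact_mod_cast Fintype.card_pos
    nlinarith
  have hentR : ent R ≤ s * log (N / s) := by
    simpa [hRA, N] using ent_le_mul_log hR (K := N) (by simp [N])
  have hentA : ent (fun y => ∑ x, A (x, y)) ≤ s * log (N / s) := by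
    have := ent_le_mul_log (a := fun y => ∑ x, A (x, y))
      (fun y => sum_nonneg fun x _ => hA (x, y)) hβN
    rwa [← Fintype.sum_prod_type_right] at this
  have hjoint : ent (G + R) - ent (G + A) ≤ ent R + s :=
    ent_add_sub_ent_add_le hG hR hA hGA
  have hmarginal : ent (fun y => ∑ x, (G + A) (x, y)) - ent (fun y => ∑ x, (G + R) (x, y)) ≤
      ent (fun y => ∑ x, A (x, y)) + s := by
    rw [hout, hout, ← hRA, Fintype.sum_prod_type_right]
    exact ent_add_sub_ent_add_le (fun y => sum_nonneg fun x _ => hG (x, y))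
      (fun y => sum_nonneg fun x _ => hA (x, y)) (fun y => sum_nonneg fun x _ => hR (x, y))
      fun y => by simpa [sum_add_distrib] using hGR y
  linarith

lemma mutInfo_redirect_le (hp : IsPMF p) (hW : IsChannel W) :
    mutInfo p (redirect d y0 W) ≤ mutInfo p W + 2 * (positiveDistortionProb d p W *
      log (Fintype.card X * Fintype.card Xh / positiveDistortionProb d p W) +
        positiveDistortionProb d p W) := by
  set G : X × Xh → ℝ := fun z => if d z.1 z.2 = 0 then p z.1 * W z.1 z.2 else 0
  set R : X × Xh → ℝ := fun z => if d z.1 z.2 = 0 then 0 else p z.1 * W z.1 z.2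
  set A : X × Xh → ℝ := fun z => if z.2 = y0 z.1 then p z.1 * badMass d W z.1 else 0
  have hJ : (fun z : X × Xh => p z.1 * W z.1 z.2) = G + R := by
    funext z; simp only [G, R, Pi.add_apply]; split_ifs <;> simp
  have hJ' : (fun z : X × Xh => p z.1 * redirect d y0 W z.1 z.2) = G + A := by
    funext z; simp only [G, A, redirect, Pi.add_apply, mul_add, mul_ite, mul_zero]
  have hsumR : ∑ z, R z = positiveDistortionProb d p W := by
    simp [R, positiveDistortionProb, badMass, Fintype.sum_prod_type, mul_sum, mul_ite]
  have hsumA : ∑ z, A z = positiveDistortionProb d p W := by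
    simp [A, positiveDistortionProb, Fintype.sum_prod_type]
  have := hp.nonempty
  have key := ent_marginal_sub_ent_le (G := G) (R := R) (A := A)
    (fun z => by simp only [G]; split_ifs <;> simp [mul_nonneg (hp.1 z.1) (hW.1 z.1 z.2)])
    (fun z => by simp only [R]; split_ifs <;> simp [mul_nonneg (hp.1 z.1) (hW.1 z.1 z.2)])
    (fun z => by simp only [A]; split_ifs <;> simp [mul_nonneg (hp.1 z.1) (badMass_nonneg hW z.1)])
    (fun y => hJ ▸ (hp.output hW).le_one y)
    (fun z => (congrFun hJ' z).symm.trans_le ((hp.joint hW.redirect).le_one z))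
    (hsumR.trans hsumA.symm)
  rw [← hJ, ← hJ', hsumA] at key
  unfold mutInfo
  linarith

lemma exists_isChannel_avgDist_eq_zero (hy0 : ∀ x, d x (y0 x) = 0) (p : X → ℝ) :
    ∃ W : X → Xh → ℝ, IsChannel W ∧ avgDist d p W = 0 := by
  refine ⟨fun x y => if y = y0 x then 1 else 0, ⟨fun x y => ite_nonneg zero_le_one le_rfl,
    fun x => by simp⟩, ?_⟩
  simp [avgDist, hy0]

lemma mutInfo_redirect_le_of_avgDist_le {dtil D : ℝ} (hdtil_pos : 0 < dtil)
    (hdtil : ∀ x y, d x y ≠ 0 → dtil ≤ d x y) (hp : IsPMF p) (hW : IsChannel W)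
    (hWD : avgDist d p W ≤ D) (hD : 0 < D) (hD' : D ≤ dtil / 4) :
    mutInfo p (redirect d y0 W) ≤ mutInfo p W +
      4 * D / dtil * log (dtil * Fintype.card X * Fintype.card Xh / (2 * D)) := by
  set N : ℝ := Fintype.card X * Fintype.card Xh
  set ε := 2 * D / dtil
  have hε : 0 < ε := by positivity
  have hε' : ε ≤ 1 / 2 := by rw [div_le_iff₀ hdtil_pos]; linarith
  have hbound : 4 * D / dtil * log (dtil * Fintype.card X * Fintype.card Xh / (2 * D)) =
      2 * (ε * log (N / ε)) := by
    simp only [N, ε]; field_simp; ring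
  rw [hbound]
  have := hp.nonempty
  have : Nonempty Xh := Nonempty.map y0 ‹Nonempty X›
  by_cases hdeg : Fintype.card X = 1 ∨ Fintype.card Xh = 1
  · have hN : 1 ≤ N := one_le_mul_of_one_le_of_one_le (by exact_mod_cast Fintype.card_pos)
      (by exact_mod_cast Fintype.card_pos)
    have hlog : 0 ≤ log (N / ε) := log_nonneg ((one_le_div hε).2 (by linarith))
    rw [mutInfo_eq_zero_of_card_eq_one hp hW.redirect hdeg,
      mutInfo_eq_zero_of_card_eq_one hp hW hdeg]
    positivity
  have hN : exp 2 * ε ≤ N := by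
    have hn : (2 : ℝ) ≤ Fintype.card X := by
      have := Fintype.card_pos (α := X); exact_mod_cast (by omega : 2 ≤ Fintype.card X)
    have hm : (2 : ℝ) ≤ Fintype.card Xh := by
      have := Fintype.card_pos (α := Xh); exact_mod_cast (by omega : 2 ≤ Fintype.card Xh)
    have he : exp 2 < 8 := by
      rw [show (2 : ℝ) = 1 + 1 by norm_num, exp_add]
      nlinarith [exp_one_lt_d9, exp_pos 1]
    nlinarith
  set s := positiveDistortionProb d p W
  have hs : 2 * s ≤ ε := by
    have := mul_positiveDistortionProb_le_avgDist hdtil hp hW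
    rw [le_div_iff₀ hdtil_pos]; linarith
  have hs0 : 0 ≤ s := sum_nonneg fun x _ => mul_nonneg (hp.1 x) (badMass_nonneg hW x)
  calc mutInfo p (redirect d y0 W)
      ≤ mutInfo p W + 2 * (s * log (N / s) + s) := mutInfo_redirect_le hp hW
    _ ≤ mutInfo p W + 2 * (ε * log (N / ε)) := by gcongr; exact mul_log_div_add_le hs0 hs hN

end Redirect

theorem stmt7_general {X Xh : Type*} [Fintype X] [Fintype Xh]
    (d : X → Xh → ℝ) (dtil : ℝ)
    (hzero : ∀ x, ∃ y, d x y = 0)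
    (hdtil_pos : 0 < dtil) (hdtil : ∀ x y, d x y ≠ 0 → dtil ≤ d x y)
    (p : X → ℝ) (hp : IsPMF p)
    (D : ℝ) (hD : 0 ≤ D) (hD' : D ≤ dtil / 4) :
    |RD d p 0 - RD d p D| ≤
      (4 * D / dtil) *
        Real.log (dtil * (Fintype.card X : ℝ) * (Fintype.card Xh : ℝ) / (2 * D)) := by
  classical
  rcases hD.eq_or_lt with rfl | hD
  · simp
  choose y0 hy0 using hzero
  obtain ⟨W0, hW0, hW0D⟩ := exists_isChannel_avgDist_eq_zero hy0 p
  have hmono : RD d p D ≤ RD d p 0 := le_RD ⟨W0, hW0, hW0D.le⟩ fun W hW hWD =>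
    RD_le_mutInfo hp hW (hWD.trans hD.le)
  have hcont : RD d p 0 - 4 * D / dtil * log (dtil * Fintype.card X * Fintype.card Xh / (2 * D))
      ≤ RD d p D := le_RD ⟨W0, hW0, hW0D.trans_le hD.le⟩ fun W hW hWD => by
    have h0 := RD_le_mutInfo hp hW.redirect (avgDist_redirect (W := W) hy0 p).le
    have h1 := mutInfo_redirect_le_of_avgDist_le (y0 := y0) hdtil_pos hdtil hp hW hWD hD hD'
    linarith
  rw [abs_of_nonneg (sub_nonneg.2 hmono)]
  linarith

/-- Continuity of the rate-distortion function in `D` near `D = 0`: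
`|R(p,0) - R(p,D)| ≤ (4D/d̃) · ln(d̃·|X|·|X̂| / (2D))` for `0 ≤ D ≤ d̃/4`,
when every source letter has a zero-distortion reconstruction. -/
theorem stmt7 {X Xh : Type*} [Fintype X] [Fintype Xh]
    (d : X → Xh → ℝ) (dstar dtil : ℝ)
    (hd0 : ∀ x y, 0 ≤ d x y) (hdstar : ∀ x y, d x y ≤ dstar)
    (hzero : ∀ x, ∃ y, d x y = 0)
    (hdtil_pos : 0 < dtil) (hdtil : ∀ x y, d x y ≠ 0 → dtil ≤ d x y)
    (p : X → ℝ) (hp : IsPMF p)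
    (D : ℝ) (hD : 0 ≤ D) (hD' : D ≤ dtil / 4) :
    |RD d p 0 - RD d p D| ≤
      (4 * D / dtil) *
        Real.log (dtil * (Fintype.card X : ℝ) * (Fintype.card Xh : ℝ) / (2 * D)) :=
  stmt7_general d dtil hzero hdtil_pos hdtil p hp D hD hD'
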